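/- The set C_r = {G ∈ ℝ^{p×m} : ‖G‖_* ≤ r, ‖G‖_op ≤ 1} is the convex hull of the set O_r = {AB' : A ∈ O(p,r), B ∈ O(m,r)} of products of p×r and m×r matrices with orthonormal columns, provided r ≤ min(p,m). -/

import Mathlib

/-!
Write `G = U diag(σ) Vᵀ` with `U`, `V` having orthonormal columns and `σ` the nonzero singular
values (from the spectral decomposition of `GᵀG`). Every element of `O_r` has `ℓ²` operator norm
at most `1`, and the linear functional `X ↦ tr((U Vᵀ)ᵀ X)`, whose value at `G` is `‖G‖_*`, is at
most `r` on `O_r`; both bounds are convex in `X`, so they pass to the convex hull.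

Conversely, if `G ∈ C_r` then `σ` lies in the polytope `[0,1]^k ∩ {∑ ≤ r}`, whose extreme points are
`0/1` vectors; by Krein–Milman `G` is a convex combination of matrices `U diag(c) Vᵀ` with `c` a
`0/1` vector with at most `r` ones. Completing the selected columns of `U` and `V` to `r`
orthonormal columns and flipping the sign of the added columns of `V` exhibits each of these as the
midpoint of two elements of `O_r`.
-/

open Matrix Real

/-- Vector of singular values of a real matrix. -/
noncomputable def singVals {p m : ℕ} (A : Matrix (Fin p) (Fin m) ℝ) : Fin m → ℝ :=
  fun i => Real.sqrt ((show (Aᵀ * A).IsHermitian by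
    rw [Matrix.IsHermitian, Matrix.conjTranspose_eq_transpose_of_trivial, Matrix.transpose_mul,
      Matrix.transpose_transpose]).eigenvalues i)

/-- Operator (spectral) norm: largest singular value. -/
noncomputable def opNorm {p m : ℕ} (A : Matrix (Fin p) (Fin m) ℝ) : ℝ :=
  ⨆ i, singVals A i

/-- Nuclear norm: sum of singular values. -/
noncomputable def nucNorm {p m : ℕ} (A : Matrix (Fin p) (Fin m) ℝ) : ℝ :=
  ∑ i, singVals A i

open scoped Matrix.Norms.L2Operator

lemma Fintype.sum_subtype_ne_zero {ι M : Type*} [Fintype ι] [AddCommMonoid M] (f : ι → M)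
    [DecidablePred fun i ↦ f i ≠ 0] : ∑ k : {i // f i ≠ 0}, f k = ∑ i, f i := by
  rw [← Finset.sum_subtype (Finset.univ.filter (f · ≠ 0)) (by simp), Finset.sum_filter_ne_zero]

namespace Matrix

section Columns

variable {n n' κ : Type*} [Fintype n]

lemma transpose_mul_self_eq_one_iff_orthonormal [DecidableEq κ] (A : Matrix n κ ℝ) :
    Aᵀ * A = 1 ↔ Orthonormal ℝ fun k ↦ WithLp.toLp 2 (A.col k) := by
  rw [orthonormal_iff_ite, ← Matrix.ext_iff]
  simp [mul_apply, one_apply, PiLp.inner_apply, col, mul_comm]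

lemma transpose_mul_self_submatrix {κ' : Type*} [DecidableEq κ] [DecidableEq κ']
    {A : Matrix n κ ℝ} (hA : Aᵀ * A = 1) {e : κ' → κ} (he : Function.Injective e) :
    (A.submatrix id e)ᵀ * A.submatrix id e = 1 := by
  rw [transpose_submatrix, ← submatrix_mul _ _ _ id _ Function.bijective_id, hA,
    submatrix_one _ he]

lemma exists_transpose_mul_self_eq_one_submatrix_eq {ρ : Type*} [DecidableEq κ] [Fintype ρ]
    [DecidableEq ρ] {A : Matrix n κ ℝ} (hA : Aᵀ * A = 1) (e : κ ↪ ρ)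
    (hρ : Fintype.card ρ ≤ Fintype.card n) :
    ∃ A' : Matrix n ρ ℝ, A'ᵀ * A' = 1 ∧ A'.submatrix id e = A := by
  obtain ⟨g⟩ : Nonempty (ρ ↪ n) := Function.Embedding.nonempty_of_card_le hρ
  set f := e.trans g
  set a : κ → EuclideanSpace ℝ n := fun k ↦ WithLp.toLp 2 (A.col k)
  have ha : Orthonormal ℝ a := (transpose_mul_self_eq_one_iff_orthonormal A).mp hA
  set v : n → EuclideanSpace ℝ n := Function.extend f a 0
  have hv : Orthonormal ℝ ((Set.range f).domRestrict v) := by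
    have : (Set.range f).domRestrict v = a ∘ (Equiv.ofInjective f f.injective).symm := by
      funext ⟨_, k, rfl⟩
      simp [v, f.injective.extend_apply, Equiv.ofInjective_symm_apply]
    rw [this]
    exact ha.comp _ (Equiv.injective _)
  obtain ⟨b, hb⟩ := hv.exists_orthonormalBasis_extension_of_card_eq (by simp)
  refine ⟨Matrix.of fun i t ↦ b (g t) i, ?_, ?_⟩
  · rw [transpose_mul_self_eq_one_iff_orthonormal]
    exact b.orthonormal.comp g g.injective
  · ext i k
    change b (f k) i = A i k
    simp [hb (f k) (Set.mem_range_self k), v, f.injective.extend_apply, a]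

omit [Fintype n] in
lemma mul_diagonal_mul_transpose_eq_submatrix [Fintype κ] [DecidableEq κ] (A : Matrix n κ ℝ)
    (B : Matrix n' κ ℝ) {c : κ → ℝ} (P : κ → Prop) [DecidablePred P]
    (hc : ∀ k, ¬ P k → c k = 0) :
    A * diagonal c * Bᵀ = (A.submatrix id Subtype.val : Matrix n (Subtype P) ℝ) *
      diagonal (fun k : Subtype P ↦ c k) *
        (B.submatrix id Subtype.val : Matrix n' (Subtype P) ℝ)ᵀ := by
  ext i j
  have hc' : ∀ k : {k // ¬ P k}, c k = 0 := fun k ↦ hc k k.2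
  rw [mul_apply, mul_apply, ← Fintype.sum_subtype_add_sum_subtype P]
  simp [hc']

variable [Fintype n'] [Fintype κ] [DecidableEq κ] {U : Matrix n κ ℝ} {V : Matrix n' κ ℝ}

lemma transpose_mul_mul_mul_transpose_mul (hU : Uᵀ * U = 1) (hV : Vᵀ * V = 1)
    (D : Matrix κ κ ℝ) : Uᵀ * (U * D * Vᵀ) * V = D := by
  simp only [← Matrix.mul_assoc, hU, Matrix.one_mul]
  rw [Matrix.mul_assoc, hV, Matrix.mul_one]

lemma trace_transpose_mul_mul_diagonal_mul_transpose (hU : Uᵀ * U = 1) (hV : Vᵀ * V = 1)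
    (d : κ → ℝ) : trace ((U * Vᵀ)ᵀ * (U * diagonal d * Vᵀ)) = ∑ k, d k := by
  rw [transpose_mul, transpose_transpose, Matrix.mul_assoc, trace_mul_comm, Matrix.mul_assoc,
    ← Matrix.mul_assoc, transpose_mul_mul_mul_transpose_mul hU hV, trace_diagonal]

end Columns

section L2OpNorm

variable {n n' κ : Type*} [Fintype n] [Fintype n'] [DecidableEq n'] [Fintype κ] [DecidableEq κ]

lemma l2_opNorm_transpose [DecidableEq n] (A : Matrix n n' ℝ) : ‖Aᵀ‖ = ‖A‖ := by
  rw [← conjTranspose_eq_transpose_of_trivial, l2_opNorm_conjTranspose]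

lemma l2_opNorm_le_one_of_transpose_mul_self {A : Matrix n κ ℝ} (hA : Aᵀ * A = 1) :
    ‖A‖ ≤ 1 := by
  have h : ‖A‖ * ‖A‖ ≤ 1 := by
    rw [← l2_opNorm_conjTranspose_mul_self, conjTranspose_eq_transpose_of_trivial, hA,
      ← diagonal_one, l2_opNorm_diagonal]
    exact (pi_norm_const_le (1 : ℝ)).trans norm_one.le
  nlinarith [norm_nonneg A]

lemma l2_opNorm_mul_transpose_le_one {A : Matrix n κ ℝ} {B : Matrix n' κ ℝ} (hA : Aᵀ * A = 1)
    (hB : Bᵀ * B = 1) : ‖A * Bᵀ‖ ≤ 1 :=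
  calc ‖A * Bᵀ‖ ≤ ‖A‖ * ‖Bᵀ‖ := l2_opNorm_mul _ _
    _ ≤ 1 * 1 := by
      rw [l2_opNorm_transpose]
      gcongr
      exacts [l2_opNorm_le_one_of_transpose_mul_self hA, l2_opNorm_le_one_of_transpose_mul_self hB]
    _ = 1 := one_mul 1

lemma diag_le_l2_opNorm [DecidableEq n] (M : Matrix n n ℝ) (i : n) : M i i ≤ ‖M‖ := by
  have h := l2_opNorm_mulVec M (EuclideanSpace.single i 1)
  calc M i i ≤ ‖M i i‖ := Real.le_norm_self _
    _ ≤ _ := by simpa using (PiLp.norm_apply_le _ i).trans h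

lemma trace_le_card_mul_l2_opNorm [DecidableEq n] (M : Matrix n n ℝ) :
    trace M ≤ Fintype.card n * ‖M‖ := by
  calc trace M ≤ ∑ _ : n, ‖M‖ := Finset.sum_le_sum fun i _ ↦ M.diag_le_l2_opNorm i
    _ = _ := by simp

lemma trace_transpose_mul_mul_transpose_le [DecidableEq n] {W : Matrix n n' ℝ} (hW : ‖W‖ ≤ 1)
    {A : Matrix n κ ℝ} {B : Matrix n' κ ℝ} (hA : Aᵀ * A = 1) (hB : Bᵀ * B = 1) :
    trace (Wᵀ * (A * Bᵀ)) ≤ Fintype.card κ :=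
  calc trace (Wᵀ * (A * Bᵀ)) = trace (Bᵀ * Wᵀ * A) := by
        rw [← Matrix.mul_assoc, trace_mul_comm, Matrix.mul_assoc]
    _ ≤ Fintype.card κ * ‖Bᵀ * Wᵀ * A‖ := trace_le_card_mul_l2_opNorm _
    _ ≤ Fintype.card κ * 1 := by
      gcongr
      calc ‖Bᵀ * Wᵀ * A‖ ≤ ‖Bᵀ‖ * ‖Wᵀ‖ * ‖A‖ :=
            (l2_opNorm_mul _ _).trans (by gcongr; exact l2_opNorm_mul _ _)
        _ ≤ 1 * 1 * 1 := by
          rw [l2_opNorm_transpose, l2_opNorm_transpose]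
          gcongr
          exacts [l2_opNorm_le_one_of_transpose_mul_self hB,
            l2_opNorm_le_one_of_transpose_mul_self hA]
        _ = 1 := by norm_num
    _ = Fintype.card κ := mul_one _

end L2OpNorm

section SVD

variable {n κ : Type*} [Fintype n]

lemma isHermitian_transpose_mul_self (G : Matrix n κ ℝ) : (Gᵀ * G).IsHermitian :=
  isHermitian_conjTranspose_mul_self G

variable [Fintype κ] [DecidableEq κ]

/-- The columns of `G Q` are orthogonal of lengths `σ k`; `U` normalizes the nonzero ones. -/
lemma exists_svd_of_transpose_mul_self_eq {G : Matrix n κ ℝ} {Q : Matrix κ κ ℝ}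
    (hQ : Qᵀ * Q = 1) {σ : κ → ℝ} (hGQ : Qᵀ * (Gᵀ * G) * Q = diagonal fun k ↦ σ k ^ 2) :
    ∃ (U : Matrix n {k // σ k ≠ 0} ℝ) (V : Matrix κ {k // σ k ≠ 0} ℝ),
      Uᵀ * U = 1 ∧ Vᵀ * V = 1 ∧ G = U * diagonal (fun k : {k // σ k ≠ 0} ↦ σ k) * Vᵀ := by
  set M := G * Q
  have hM : Mᵀ * M = diagonal fun k ↦ σ k ^ 2 := by
    simpa only [M, transpose_mul, Matrix.mul_assoc] using hGQ
  have hM0 : ∀ k, σ k = 0 → ∀ i, M i k = 0 := by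
    intro k hk i
    have hcol : ∑ j, M j k * M j k = 0 := by
      simpa [mul_apply, hk] using congr_fun (congr_fun hM k) k
    exact mul_self_eq_zero.mp <|
      (Finset.sum_eq_zero_iff_of_nonneg fun j _ ↦ mul_self_nonneg _).mp hcol i (Finset.mem_univ i)
  set U₀ := M * diagonal σ⁻¹
  have hU₀ : U₀ᵀ * U₀ = diagonal fun k ↦ (σ k)⁻¹ * (σ k ^ 2 * (σ k)⁻¹) := by
    simp only [U₀, transpose_mul, diagonal_transpose, Matrix.mul_assoc, ← Matrix.mul_assoc Mᵀ,
      hM, diagonal_mul_diagonal, Pi.inv_apply]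
  have hMσ : U₀ * diagonal σ = M := by
    ext i k
    by_cases hk : σ k = 0
    · simp [U₀, hk, hM0 k hk i]
    · simp [U₀, hk]
  refine ⟨U₀.submatrix id Subtype.val, Q.submatrix id Subtype.val, ?_,
    transpose_mul_self_submatrix hQ Subtype.val_injective, ?_⟩
  · rw [transpose_submatrix, ← submatrix_mul _ _ _ id _ Function.bijective_id, hU₀]
    ext k l
    by_cases hkl : k = l
    · subst hkl
      have hk : σ k ≠ 0 := k.2
      simp only [submatrix_apply, diagonal_apply_eq, one_apply_eq]
      field_simp
    · simp [hkl, Subtype.val_injective.ne hkl]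
  · rw [← mul_diagonal_mul_transpose_eq_submatrix _ _ _ fun k hk ↦ not_not.mp hk, hMσ,
      Matrix.mul_assoc, mul_eq_one_comm.mp hQ, Matrix.mul_one]

end SVD

end Matrix

section KreinMilman

variable {E : Type*} [AddCommGroup E] [Module ℝ E]

lemma eq_zero_of_forall_abs_le_add_smul_mem {K : Set E} {x v : E} {ε : ℝ}
    (hx : x ∈ K.extremePoints ℝ) (hε : 0 < ε) (h : ∀ c : ℝ, |c| ≤ ε → x + c • v ∈ K) :
    v = 0 := by
  have hseg : x ∈ openSegment ℝ (x + (-ε) • v) (x + ε • v) := by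
    simpa [neg_smul, ← sub_eq_add_neg] using mem_openSegment_sub_add (𝕜 := ℝ) x (ε • v)
  have := hx.2 (h (-ε) (by simp [abs_of_pos hε])) (h ε (by simp [abs_of_pos hε])) hseg
  simpa [hε.ne'] using this

variable [TopologicalSpace E] [T2Space E] [IsTopologicalAddGroup E] [ContinuousSMul ℝ E]
  [LocallyConvexSpace ℝ E]

lemma IsCompact.subset_convexHull_of_extremePoints_subset {K V : Set E} (hK : IsCompact K)
    (hKc : Convex ℝ K) (hV : V.Finite) (h : K.extremePoints ℝ ⊆ V) : K ⊆ convexHull ℝ V := by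
  rw [← closure_convexHull_extremePoints hK hKc]
  exact closure_minimal (convexHull_mono h) (hV.isClosed_convexHull ℝ)

end KreinMilman

section CappedCube

variable {ι : Type*} [Fintype ι]

def cappedCube (ι : Type*) [Fintype ι] (r : ℕ) : Set (ι → ℝ) :=
  Set.univ.pi (fun _ ↦ Set.Icc 0 1) ∩ {x | ∑ i, x i ≤ r}

lemma isCompact_cappedCube (r : ℕ) : IsCompact (cappedCube ι r) :=
  (isCompact_univ_pi fun _ ↦ isCompact_Icc).inter_right
    (isClosed_le (continuous_finsetSum _ fun i _ ↦ continuous_apply i) continuous_const)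

lemma convex_cappedCube (r : ℕ) : Convex ℝ (cappedCube ι r) :=
  (convex_pi fun _ _ ↦ convex_Icc 0 1).inter <| convex_halfSpace_le
    ⟨fun x y ↦ Finset.sum_add_distrib, fun c x ↦ by simp [Finset.mul_sum]⟩ _

variable [DecidableEq ι] {r : ℕ} {x : ι → ℝ}

lemma notMem_Ioo_of_mem_extremePoints_cappedCube (hx : x ∈ (cappedCube ι r).extremePoints ℝ)
    {i j : ι} (hji : j ≠ i) (hi : x i ∈ Set.Ioo 0 1) : x j ∉ Set.Ioo 0 1 := by
  intro hj
  obtain ⟨hx01, hxr⟩ := hx.1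
  set ε := min (min (x i) (1 - x i)) (min (x j) (1 - x j)) with hε
  have hεpos : 0 < ε :=
    lt_min (lt_min hi.1 (by linarith [hi.2])) (lt_min hj.1 (by linarith [hj.2]))
  have hεle : ε ≤ x i ∧ ε ≤ 1 - x i ∧ ε ≤ x j ∧ ε ≤ 1 - x j := by
    simp only [hε, min_le_iff, le_refl, true_or, or_true, and_self]
  have hmem : ∀ c : ℝ, |c| ≤ ε → x + c • (Pi.single i 1 - Pi.single j 1) ∈ cappedCube ι r := by
    intro c hc
    rw [abs_le] at hc
    refine ⟨fun l _ ↦ ?_, ?_⟩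
    · rcases eq_or_ne l i with rfl | hli
      · simp only [Pi.add_apply, Pi.smul_apply, Pi.sub_apply, Pi.single_eq_same,
          Pi.single_eq_of_ne hji.symm, smul_eq_mul, Set.mem_Icc]
        constructor <;> linarith
      rcases eq_or_ne l j with rfl | hlj
      · simp only [Pi.add_apply, Pi.smul_apply, Pi.sub_apply, Pi.single_eq_same,
          Pi.single_eq_of_ne hli, smul_eq_mul, Set.mem_Icc]
        constructor <;> linarith
      · simpa [hli, hlj] using hx01 l trivial
    · simpa [Finset.sum_add_distrib, ← Finset.mul_sum, Finset.sum_sub_distrib] using hxr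
  have h0 := eq_zero_of_forall_abs_le_add_smul_mem hx hεpos hmem
  simpa [hji.symm] using congr_fun h0 i

lemma exists_mem_Ioo_of_mem_extremePoints_cappedCube
    (hx : x ∈ (cappedCube ι r).extremePoints ℝ) {i : ι} (hi : x i ∈ Set.Ioo 0 1) :
    ∃ j ≠ i, x j ∈ Set.Ioo 0 1 := by
  by_contra! hint
  obtain ⟨hx01, hxr⟩ := hx.1
  have hx01' : ∀ j ≠ i, x j = 0 ∨ x j = 1 := fun j hj ↦ by
    have h : x j ∈ Set.Icc (0 : ℝ) 1 \ Set.Ioo 0 1 := ⟨hx01 j trivial, hint j hj⟩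
    simpa [Set.Icc_sdiff_Ioo_same zero_le_one] using h
  set N := ((Finset.univ.erase i).filter (x · = 1)).card
  have hsum : ∑ l, x l = x i + N := by
    rw [← Finset.add_sum_erase _ _ (Finset.mem_univ i), Finset.natCast_card_filter]
    congr 1
    refine Finset.sum_congr rfl fun j hj ↦ ?_
    rcases hx01' j (Finset.ne_of_mem_erase hj) with h | h <;> simp [h]
  have hNr : (N : ℝ) + 1 ≤ r := by
    have hlt : N < r := by exact_mod_cast (show (N : ℝ) < r by linarith [hxr.out, hi.1])
    exact_mod_cast hlt
  set ε := min (x i) (1 - x i)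
  have hεpos : 0 < ε := lt_min hi.1 (by linarith [hi.2])
  have hεi : ε ≤ x i := min_le_left _ _
  have hεi' : ε ≤ 1 - x i := min_le_right _ _
  have hmem : ∀ c : ℝ, |c| ≤ ε → x + c • Pi.single i 1 ∈ cappedCube ι r := by
    intro c hc
    rw [abs_le] at hc
    refine ⟨fun l _ ↦ ?_, ?_⟩
    · rcases eq_or_ne l i with rfl | hli
      · simp only [Pi.add_apply, Pi.smul_apply, Pi.single_eq_same, smul_eq_mul, Set.mem_Icc]
        constructor <;> linarith
      · simpa [hli] using hx01 l trivial
    · simp only [Set.mem_ofPred_eq, Pi.add_apply, Pi.smul_apply, smul_eq_mul,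
        Finset.sum_add_distrib, ← Finset.mul_sum, Finset.sum_pi_single', Finset.mem_univ,
        if_true, mul_one, hsum]
      linarith
  have h0 := eq_zero_of_forall_abs_le_add_smul_mem hx hεpos hmem
  simpa using congr_fun h0 i

lemma extremePoints_cappedCube_subset :
    (cappedCube ι r).extremePoints ℝ ⊆ Set.univ.pi fun _ ↦ {0, 1} := by
  intro x hx i _
  have hi : x i ∈ Set.Icc 0 1 := hx.1.1 i trivial
  by_contra hi'
  have hfrac : x i ∈ Set.Ioo 0 1 := by
    by_contra h
    have h' : x i ∈ Set.Icc (0 : ℝ) 1 \ Set.Ioo 0 1 := ⟨hi, h⟩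
    rw [Set.Icc_sdiff_Ioo_same zero_le_one] at h'
    exact hi' h'
  obtain ⟨j, hji, hj⟩ := exists_mem_Ioo_of_mem_extremePoints_cappedCube hx hfrac
  exact notMem_Ioo_of_mem_extremePoints_cappedCube hx hji hfrac hj

lemma cappedCube_subset_convexHull (r : ℕ) :
    cappedCube ι r ⊆ convexHull ℝ (cappedCube ι r ∩ Set.univ.pi fun _ ↦ {0, 1}) :=
  (isCompact_cappedCube r).subset_convexHull_of_extremePoints_subset (convex_cappedCube r)
    ((Set.Finite.pi fun _ ↦ Set.toFinite _).inter_of_right _)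
    (Set.subset_inter extremePoints_subset extremePoints_cappedCube_subset)

end CappedCube

section SingularValues

variable {p m r : ℕ}

lemma singVals_sq (G : Matrix (Fin p) (Fin m) ℝ) (i : Fin m) :
    singVals G i ^ 2 = G.isHermitian_transpose_mul_self.eigenvalues i :=
  Real.sq_sqrt (eigenvalues_conjTranspose_mul_self_nonneg G i)

lemma singVals_nonneg (G : Matrix (Fin p) (Fin m) ℝ) (i : Fin m) : 0 ≤ singVals G i :=
  Real.sqrt_nonneg _

theorem exists_svd (G : Matrix (Fin p) (Fin m) ℝ) :
    ∃ (U : Matrix (Fin p) {i // singVals G i ≠ 0} ℝ) (V : Matrix (Fin m) {i // singVals G i ≠ 0} ℝ),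
      Uᵀ * U = 1 ∧ Vᵀ * V = 1 ∧
        G = U * diagonal (fun k : {i // singVals G i ≠ 0} ↦ singVals G k) * Vᵀ := by
  have hG := G.isHermitian_transpose_mul_self
  have hQ : star (hG.eigenvectorUnitary : Matrix (Fin m) (Fin m) ℝ) = hG.eigenvectorUnitaryᵀ :=
    conjTranspose_eq_transpose_of_trivial _
  refine exists_svd_of_transpose_mul_self_eq (Q := hG.eigenvectorUnitary) ?_ ?_
  · rw [← hQ]
    exact Unitary.coe_star_mul_self _
  · have h := hG.conjStarAlgAut_star_eigenvectorUnitary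
    rw [Unitary.conjStarAlgAut_star_apply, hQ] at h
    simpa [singVals_sq] using h

variable {G : Matrix (Fin p) (Fin m) ℝ} {U : Matrix (Fin p) {i // singVals G i ≠ 0} ℝ}
  {V : Matrix (Fin m) {i // singVals G i ≠ 0} ℝ}

lemma nucNorm_eq_trace (hU : Uᵀ * U = 1) (hV : Vᵀ * V = 1)
    (hG : G = U * diagonal (fun k : {i // singVals G i ≠ 0} ↦ singVals G k) * Vᵀ) :
    nucNorm G = trace ((U * Vᵀ)ᵀ * G) := by
  rw [nucNorm, ← Fintype.sum_subtype_ne_zero,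
    ← trace_transpose_mul_mul_diagonal_mul_transpose hU hV, ← hG]

lemma singVals_le_l2_opNorm (hU : Uᵀ * U = 1) (hV : Vᵀ * V = 1)
    (hG : G = U * diagonal (fun k : {i // singVals G i ≠ 0} ↦ singVals G k) * Vᵀ) (i : Fin m) :
    singVals G i ≤ ‖G‖ := by
  by_cases hi : singVals G i = 0
  · exact hi ▸ norm_nonneg G
  have hD : Uᵀ * G * V = diagonal fun k : {i // singVals G i ≠ 0} ↦ singVals G k :=
    (congrArg (Uᵀ * · * V) hG).trans (transpose_mul_mul_mul_transpose_mul hU hV _)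
  calc singVals G i = (Uᵀ * G * V) ⟨i, hi⟩ ⟨i, hi⟩ := by rw [hD, diagonal_apply_eq]
    _ ≤ ‖Uᵀ * G * V‖ := diag_le_l2_opNorm _ _
    _ ≤ ‖Uᵀ‖ * ‖G‖ * ‖V‖ := (l2_opNorm_mul _ _).trans (by gcongr; exact l2_opNorm_mul _ _)
    _ ≤ 1 * ‖G‖ * 1 := by
        rw [l2_opNorm_transpose]
        gcongr <;> exact l2_opNorm_le_one_of_transpose_mul_self ‹_›
    _ = ‖G‖ := by ring

end SingularValues

section PartialIsometries

variable {p m r : ℕ}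

/-- The set `O_r`. -/
def partialIsometries (p m r : ℕ) : Set (Matrix (Fin p) (Fin m) ℝ) :=
  {G | ∃ (A : Matrix (Fin p) (Fin r) ℝ) (B : Matrix (Fin m) (Fin r) ℝ),
    Aᵀ * A = 1 ∧ Bᵀ * B = 1 ∧ G = A * Bᵀ}

lemma mul_transpose_mem_partialIsometries {A : Matrix (Fin p) (Fin r) ℝ}
    {B : Matrix (Fin m) (Fin r) ℝ} (hA : Aᵀ * A = 1) (hB : Bᵀ * B = 1) :
    A * Bᵀ ∈ partialIsometries p m r :=
  ⟨A, B, hA, hB, rfl⟩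

theorem convexHull_partialIsometries_subset (p m r : ℕ) :
    convexHull ℝ (partialIsometries p m r) ⊆ {G | nucNorm G ≤ r ∧ opNorm G ≤ 1} := by
  intro G hG
  obtain ⟨U, V, hU, hV, hSVD⟩ := exists_svd G
  obtain ⟨_, ⟨A, B, hA, hB, rfl⟩, hnorm⟩ :=
    convexOn_univ_norm.exists_ge_of_mem_convexHull (Set.subset_univ _) hG
  let f := (traceLinearMap (Fin m) ℝ ℝ).comp (mulLeftLinearMap (Fin m) ℝ (U * Vᵀ)ᵀ)
  obtain ⟨_, ⟨A', B', hA', hB', rfl⟩, htrace⟩ :=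
    (f.convexOn convex_univ).exists_ge_of_mem_convexHull (Set.subset_univ _) hG
  refine ⟨?_, Real.iSup_le (fun i ↦ ?_) zero_le_one⟩
  · calc nucNorm G = f G := nucNorm_eq_trace hU hV hSVD
      _ ≤ f (A' * B'ᵀ) := htrace
      _ ≤ Fintype.card (Fin r) :=
        trace_transpose_mul_mul_transpose_le (l2_opNorm_mul_transpose_le_one hU hV) hA' hB'
      _ = r := by rw [Fintype.card_fin]
  · exact (singVals_le_l2_opNorm hU hV hSVD i).trans
      (hnorm.trans (l2_opNorm_mul_transpose_le_one hA hB))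

/-- `A Bᵀ` is the midpoint of `A' B'ᵀ` and `A' (B' diag ε)ᵀ`, where `A'`, `B'` complete the columns
of `A`, `B` to `r` orthonormal columns and `ε` is `-1` exactly on the added columns. -/
theorem mul_transpose_mem_convexHull_partialIsometries {κ : Type*} [Fintype κ] [DecidableEq κ]
    {A : Matrix (Fin p) κ ℝ} {B : Matrix (Fin m) κ ℝ} (hA : Aᵀ * A = 1) (hB : Bᵀ * B = 1)
    (hκ : Fintype.card κ ≤ r) (hrp : r ≤ p) (hrm : r ≤ m) :
    A * Bᵀ ∈ convexHull ℝ (partialIsometries p m r) := by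
  obtain ⟨e⟩ : Nonempty (κ ↪ Fin r) := Function.Embedding.nonempty_of_card_le (by simpa using hκ)
  obtain ⟨A', hA', rfl⟩ := exists_transpose_mul_self_eq_one_submatrix_eq hA e (by simpa using hrp)
  obtain ⟨B', hB', rfl⟩ := exists_transpose_mul_self_eq_one_submatrix_eq hB e (by simpa using hrm)
  set ε : Fin r → ℝ := fun t ↦ if t ∈ Finset.univ.map e then 1 else -1
  have hB'ε : (B' * diagonal ε)ᵀ * (B' * diagonal ε) = 1 := by
    rw [transpose_mul, diagonal_transpose, Matrix.mul_assoc, ← Matrix.mul_assoc B'ᵀ, hB',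
      Matrix.one_mul, diagonal_mul_diagonal, ← diagonal_one]
    congr 1
    funext t
    by_cases ht : t ∈ Finset.univ.map e <;> simp only [ε, ht, if_true, if_false] <;> norm_num
  have hmid : (1 / 2 : ℝ) • (A' * B'ᵀ) + (1 / 2 : ℝ) • (A' * (B' * diagonal ε)ᵀ) =
      A'.submatrix id e * (B'.submatrix id e)ᵀ := by
    rw [transpose_mul, diagonal_transpose, ← Matrix.mul_assoc]
    ext i j
    simp only [Matrix.add_apply, Matrix.smul_apply, mul_apply, transpose_apply, submatrix_apply,
      id, diagonal_apply, mul_ite, mul_zero, Finset.sum_ite_eq', Finset.mem_univ, if_true,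
      smul_eq_mul, Finset.mul_sum, ← Finset.sum_add_distrib]
    rw [← Finset.sum_map Finset.univ e (fun t ↦ A' i t * B' j t),
      ← Finset.univ_inter (Finset.univ.map e), ← Finset.sum_ite_mem]
    refine Finset.sum_congr rfl fun t _ ↦ ?_
    by_cases ht : t ∈ Finset.univ.map e <;> simp only [ε, ht, if_true, if_false] <;> ring
  rw [← hmid]
  exact convex_convexHull ℝ _ (subset_convexHull ℝ _ (mul_transpose_mem_partialIsometries hA' hB'))
    (subset_convexHull ℝ _ (mul_transpose_mem_partialIsometries hA' hB'ε)) (by norm_num)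
    (by norm_num) (by norm_num)

lemma mul_diagonal_mul_transpose_mem_convexHull_partialIsometries {ι : Type*} [Fintype ι]
    [DecidableEq ι] {U : Matrix (Fin p) ι ℝ} {V : Matrix (Fin m) ι ℝ} (hU : Uᵀ * U = 1)
    (hV : Vᵀ * V = 1) {c : ι → ℝ} (hc : c ∈ cappedCube ι r ∩ Set.univ.pi fun _ ↦ {0, 1})
    (hrp : r ≤ p) (hrm : r ≤ m) :
    U * diagonal c * Vᵀ ∈ convexHull ℝ (partialIsometries p m r) := by
  obtain ⟨⟨-, hcr⟩, hc01⟩ := hc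
  have hc01' : ∀ k, c k = 0 ∨ c k = 1 := fun k ↦ by simpa using hc01 k trivial
  rw [mul_diagonal_mul_transpose_eq_submatrix U V (c · = 1) fun k hk ↦ (hc01' k).resolve_right hk,
    (congrArg diagonal (funext fun k ↦ k.2)).trans diagonal_one, Matrix.mul_one]
  refine mul_transpose_mem_convexHull_partialIsometries
    (transpose_mul_self_submatrix hU Subtype.val_injective)
    (transpose_mul_self_submatrix hV Subtype.val_injective) ?_ hrp hrm
  have hcard : (Fintype.card {k // c k = 1} : ℝ) = ∑ k, c k := by
    rw [Fintype.card_subtype, Finset.natCast_card_filter]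
    exact Finset.sum_congr rfl fun k _ ↦ by rcases hc01' k with h | h <;> simp [h]
  exact_mod_cast hcard.trans_le hcr

theorem subset_convexHull_partialIsometries (hrp : r ≤ p) (hrm : r ≤ m) :
    {G | nucNorm G ≤ r ∧ opNorm G ≤ 1} ⊆ convexHull ℝ (partialIsometries p m r) := by
  rintro G ⟨hnuc, hop⟩
  obtain ⟨U, V, hU, hV, hG⟩ := exists_svd G
  have hσ : (fun k : {i // singVals G i ≠ 0} ↦ singVals G k) ∈ cappedCube _ r :=
    ⟨fun k _ ↦ ⟨singVals_nonneg G k, (le_ciSup (Set.finite_range _).bddAbove k.1).trans hop⟩,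
      (Fintype.sum_subtype_ne_zero (singVals G)).trans_le hnuc⟩
  let Φ : ({i // singVals G i ≠ 0} → ℝ) →ₗ[ℝ] Matrix (Fin p) (Fin m) ℝ :=
    { toFun c := U * diagonal c * Vᵀ
      map_add' c d := by
        rw [show diagonal (c + d) = diagonal c + diagonal d from (diagonal_add c d).symm,
          Matrix.mul_add, Matrix.add_mul]
      map_smul' a c := by simp }
  have hΦ : Φ '' (cappedCube _ r ∩ Set.univ.pi fun _ ↦ {0, 1}) ⊆
      convexHull ℝ (partialIsometries p m r) := by
    rintro _ ⟨c, hc, rfl⟩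
    exact mul_diagonal_mul_transpose_mem_convexHull_partialIsometries hU hV hc hrp hrm
  have key := convexHull_min hΦ (convex_convexHull ℝ _)
    (Φ.image_convexHull _ ▸ Set.mem_image_of_mem Φ (cappedCube_subset_convexHull r hσ))
  convert key using 1
  exact hG

end PartialIsometries

/-- Provided `r ≤ min(p,m)`, the set
`C_r = {G : ‖G‖_* ≤ r, ‖G‖_op ≤ 1}` is the convex hull of
`O_r = {AB' : A ∈ O(p,r), B ∈ O(m,r)}`. -/
theorem stmt14 {p m r : ℕ} (hrp : r ≤ p) (hrm : r ≤ m) :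
    convexHull ℝ {G : Matrix (Fin p) (Fin m) ℝ |
        ∃ (A : Matrix (Fin p) (Fin r) ℝ) (B : Matrix (Fin m) (Fin r) ℝ),
          Aᵀ * A = 1 ∧ Bᵀ * B = 1 ∧ G = A * Bᵀ}
      = {G : Matrix (Fin p) (Fin m) ℝ | nucNorm G ≤ (r : ℝ) ∧ opNorm G ≤ 1} :=
  (convexHull_partialIsometries_subset p m r).antisymm (subset_convexHull_partialIsometries hrp hrm)
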